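/- arXiv:2509.02996 — 5 statements merged into one kernel-verified Lean document; each statement's English description precedes it below -/
import Mathlib

section
/- Let π be a G-invariant probability distribution on a finite set X, and let P be π-reversible (i.e., π(x)P(x,y) = π(y)P(y,x) for all x,y). If ν is a probability measure on G × G satisfying (g,h) equal in distribution to (h^{-1}, g^{-1}), then P_da := E_{(g,h)∼ν}[U_g P U_h] is π-reversible. -/
/-!
By `G`-invariance of `π` and reversibility of `P`,
`π x (U_g P U_h)(x, y) = π(g • x) P(g • x, h⁻¹ • y) = π(h⁻¹ • y) P(h⁻¹ • y, g • x)
  = π y (U_{h⁻¹} P U_{g⁻¹})(y, x)`.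
The involution `(g, h) ↦ (h⁻¹, g⁻¹)` of `G × G` preserves `ν`, so averaging over `ν` gives
detailed balance for `P_da`.
-/

open Matrix

/-- The permutation matrix of the action of `g`: `(U_g f)(x) = f(g • x)`. -/
noncomputable def permMat {X G : Type*} [Fintype X] [DecidableEq X] [Group G] [MulAction G X]
    (g : G) : Matrix X X ℝ :=
  fun x y => if y = g • x then 1 else 0

/-- The double-average `P_da = Σ_{(g,h)} ν(g,h) U_g P U_h`. -/
noncomputable def doubleAvg {X G : Type*} [Fintype X] [DecidableEq X] [Fintype G] [Group G]
    [MulAction G X] (ν : G × G → ℝ) (P : Matrix X X ℝ) : Matrix X X ℝ :=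
  ∑ p : G × G, ν p • (permMat p.1 * P * permMat p.2)

section

variable {X G : Type*} [Fintype X] [DecidableEq X] [Group G] [MulAction G X]

lemma permMat_mul_apply (g : G) (A : Matrix X X ℝ) (x y : X) :
    (permMat g * A : Matrix X X ℝ) x y = A (g • x) y := by
  simp [permMat, Matrix.mul_apply]

lemma mul_permMat_apply (A : Matrix X X ℝ) (h : G) (x y : X) :
    (A * permMat h : Matrix X X ℝ) x y = A x (h⁻¹ • y) := by
  simp [permMat, Matrix.mul_apply, ← inv_smul_eq_iff]

lemma permMat_mul_mul_permMat_apply (g h : G) (A : Matrix X X ℝ) (x y : X) :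
    (permMat g * A * permMat h : Matrix X X ℝ) x y = A (g • x) (h⁻¹ • y) := by
  rw [mul_permMat_apply, permMat_mul_apply]

lemma reversible_permMat_mul_mul_permMat {π : X → ℝ} (hπ : ∀ (g : G) x, π (g • x) = π x)
    {P : Matrix X X ℝ} (hP : ∀ x y, π x * P x y = π y * P y x) (g h : G) (x y : X) :
    π x * (permMat g * P * permMat h : Matrix X X ℝ) x y =
      π y * (permMat h⁻¹ * P * permMat g⁻¹ : Matrix X X ℝ) y x := by
  rw [permMat_mul_mul_permMat_apply, permMat_mul_mul_permMat_apply, inv_inv,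
    ← hπ g x, hP, hπ]

end

theorem stmt3_general {X G : Type*} [Fintype X] [DecidableEq X] [Fintype G] [Group G] [MulAction G X]
    (π : X → ℝ) (hπinv : ∀ (g : G) (x : X), π (g • x) = π x)
    (P : Matrix X X ℝ) (hPrev : ∀ x y, π x * P x y = π y * P y x)
    (ν : G × G → ℝ) (hνsymm : ∀ g h : G, ν (g, h) = ν (h⁻¹, g⁻¹)) :
    ∀ x y, π x * doubleAvg ν P x y = π y * doubleAvg ν P y x := by
  intro x y
  simp only [doubleAvg, Matrix.sum_apply, Matrix.smul_apply, smul_eq_mul, Finset.mul_sum,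
    mul_left_comm (π _)]
  refine Fintype.sum_equiv ((Equiv.prodComm G G).trans ((Equiv.inv G).prodCongr (Equiv.inv G)))
    _ _ fun ⟨g, h⟩ => ?_
  simp only [Equiv.trans_apply, Equiv.prodComm_apply, Prod.swap_prod_mk, Equiv.prodCongr_apply,
    Prod.map_apply, Equiv.inv_apply]
  rw [hνsymm, reversible_permMat_mul_mul_permMat hπinv hPrev]

/-- if `π` is `G`-invariant with full support, `P` is `π`-reversible and
`ν(g,h) = ν(h⁻¹,g⁻¹)`, then `P_da` is `π`-reversible. -/
theorem stmt3 {X G : Type*} [Fintype X] [DecidableEq X] [Fintype G] [Group G] [MulAction G X]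
    (π : X → ℝ) (hπpos : ∀ x, 0 < π x) (hπsum : ∑ x, π x = 1)
    (hπinv : ∀ (g : G) (x : X), π (g • x) = π x)
    (P : Matrix X X ℝ) (hPnn : ∀ x y, 0 ≤ P x y) (hProw : ∀ x, ∑ y, P x y = 1)
    (hPrev : ∀ x y, π x * P x y = π y * P y x)
    (ν : G × G → ℝ) (hνnn : ∀ p, 0 ≤ ν p) (hνsum : ∑ p : G × G, ν p = 1)
    (hνsymm : ∀ g h : G, ν (g, h) = ν (h⁻¹, g⁻¹)) :
    ∀ x y, π x * doubleAvg ν P x y = π y * doubleAvg ν P y x :=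
  stmt3_general π hπinv P hPrev ν hνsymm
end

section
/- Let G₁ ≤ G₂ be finite groups acting on a finite set X with π invariant under G₂, and let P be π-stationary. Writing (P_la)_ra(G_i) = Q_i P Q_i with Q_i := (1/|G_i|) Σ_{g∈G_i} U_g, we have γ((P_la)_ra(G₂)) ≥ γ((P_la)_ra(G₁)), where γ(K) = 1 − ‖K‖_{L²₀(π)→L²₀(π)}. -/
open Matrix

/-- The `L²(π)` norm of a function. -/
noncomputable def pNorm {X : Type*} [Fintype X] (π f : X → ℝ) : ℝ :=
  Real.sqrt (∑ x, π x * f x ^ 2)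

/-- Operator norm of `K` restricted to `L²₀(π)`. -/
noncomputable def opNorm20 {X : Type*} [Fintype X] (π : X → ℝ) (K : Matrix X X ℝ) : ℝ :=
  ⨆ f : {f : X → ℝ // (∑ x, π x * f x = 0) ∧ pNorm π f ≤ 1}, pNorm π (K.mulVec f.1)

/-!
The average `Q_G` over the whole group absorbs the average `Q_H` over a subgroup on either side,
so `Q_G P Q_G = Q_G (Q_H P Q_H) Q_G`. Since `π` is invariant, `Q_G` is a contraction of `L²(π)`
that preserves `π`-means, hence maps the unit ball of `L²₀(π)` into itself; sandwiching between
two such operators cannot increase the norm on `L²₀(π)`.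
-/

open Finset

section L2

variable {X : Type*} [Fintype X]

lemma pNorm_le_pNorm {π f g : X → ℝ} (hπ : ∀ x, 0 ≤ π x) (hfg : ∀ x, |f x| ≤ |g x|) :
    pNorm π f ≤ pNorm π g :=
  Real.sqrt_le_sqrt <| sum_le_sum fun x _ =>
    mul_le_mul_of_nonneg_left (sq_le_sq.mpr (hfg x)) (hπ x)

lemma abs_le_of_pNorm_le_one {π f : X → ℝ} (hπ : ∀ x, 0 < π x) (hf : pNorm π f ≤ 1) (y : X) :
    |f y| ≤ 1 + (π y)⁻¹ := by
  have hy : π y * f y ^ 2 ≤ 1 :=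
    (single_le_sum (fun x _ => mul_nonneg (hπ x).le (sq_nonneg (f x))) (mem_univ y)).trans
      (Real.sqrt_le_one.mp hf)
  have hsq : f y ^ 2 ≤ (π y)⁻¹ := by
    rwa [← one_div, le_div_iff₀ (hπ y), mul_comm]
  nlinarith [abs_mul_abs_self (f y), abs_nonneg (f y)]

lemma exists_pNorm_mulVec_le (π : X → ℝ) (hπ : ∀ x, 0 < π x) (K : Matrix X X ℝ) :
    ∃ C, ∀ f, pNorm π f ≤ 1 → pNorm π (K *ᵥ f) ≤ C := by
  refine ⟨pNorm π fun x => ∑ y, |K x y| * (1 + (π y)⁻¹), fun f hf => ?_⟩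
  refine pNorm_le_pNorm (fun x => (hπ x).le) fun x => le_trans ?_ (le_abs_self _)
  calc |(K *ᵥ f) x| ≤ ∑ y, |K x y * f y| := abs_sum_le_sum_abs _ _
    _ ≤ ∑ y, |K x y| * (1 + (π y)⁻¹) := sum_le_sum fun y _ => by
        rw [abs_mul]
        exact mul_le_mul_of_nonneg_left (abs_le_of_pNorm_le_one hπ hf y) (abs_nonneg _)

lemma opNorm20_mul_mul_le {π : X → ℝ} (hπ : ∀ x, 0 < π x) {A K B : Matrix X X ℝ}
    (hA : ∀ f, pNorm π (A *ᵥ f) ≤ pNorm π f)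
    (hB_mean : ∀ f, ∑ x, π x * (B *ᵥ f) x = ∑ x, π x * f x)
    (hB : ∀ f, pNorm π (B *ᵥ f) ≤ pNorm π f) :
    opNorm20 π (A * K * B) ≤ opNorm20 π K := by
  obtain ⟨C, hC⟩ := exists_pNorm_mulVec_le π hπ K
  -- without this bound `⨆` would be the junk value `0` and `le_ciSup` would fail
  have hbdd : BddAbove (Set.range fun f : {f : X → ℝ // (∑ x, π x * f x = 0) ∧ pNorm π f ≤ 1} =>
      pNorm π (K *ᵥ f.1)) := ⟨C, by rintro _ ⟨f, rfl⟩; exact hC f.1 f.2.2⟩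
  have : Nonempty {f : X → ℝ // (∑ x, π x * f x = 0) ∧ pNorm π f ≤ 1} :=
    ⟨⟨0, by simp, by simp [pNorm]⟩⟩
  refine ciSup_le fun ⟨f, hf_mean, hf_norm⟩ => ?_
  calc pNorm π ((A * K * B) *ᵥ f) = pNorm π (A *ᵥ (K *ᵥ (B *ᵥ f))) := by
        simp only [mulVec_mulVec, Matrix.mul_assoc]
    _ ≤ pNorm π (K *ᵥ (B *ᵥ f)) := hA _
    _ ≤ opNorm20 π K :=
        le_ciSup (f := fun f : {f : X → ℝ // _ ∧ _} => pNorm π (K *ᵥ f.1)) hbdd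
          ⟨B *ᵥ f, (hB_mean f).trans hf_mean, (hB f).trans hf_norm⟩

end L2

section Invariance

variable {X G ι : Type*} [Fintype X] [Group G] [MulAction G X] [Fintype ι] {π : X → ℝ}

lemma sum_mul_comp_smul (hπ : ∀ (g : G) x, π (g • x) = π x) (g : G) (F : X → ℝ) :
    ∑ x, π x * F (g • x) = ∑ x, π x * F x :=
  calc ∑ x, π x * F (g • x) = ∑ x, π (g • x) * F (g • x) := by simp only [hπ]
    _ = ∑ x, π x * F x := Equiv.sum_comp (MulAction.toPerm g) (fun x => π x * F x)

lemma sum_mul_average_comp_smul [Nonempty ι] (hπ : ∀ (g : G) x, π (g • x) = π x)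
    (u : ι → G) (F : X → ℝ) :
    ∑ x, π x * ((∑ i, F (u i • x)) / Fintype.card ι) = ∑ x, π x * F x := by
  simp_rw [mul_div_assoc', ← sum_div, mul_sum]
  rw [sum_comm]
  simp_rw [sum_mul_comp_smul hπ, sum_const, card_univ, nsmul_eq_mul]
  field_simp

end Invariance

section Averaging

variable {X G ι : Type*} [Fintype X] [DecidableEq X] [Group G] [MulAction G X] [Fintype ι]

lemma permMat_mul (g g' : G) : (permMat g * permMat g' : Matrix X X ℝ) = permMat (g' * g) := by
  ext x y
  simp only [mul_apply, permMat, ite_mul, one_mul, zero_mul, sum_ite_eq', mem_univ, if_true,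
    mul_smul]

lemma permMat_mulVec (g : G) (f : X → ℝ) :
    (permMat g : Matrix X X ℝ) *ᵥ f = fun x => f (g • x) := by
  ext x
  simp only [mulVec, dotProduct, permMat, ite_mul, one_mul, zero_mul, sum_ite_eq', mem_univ,
    if_true]

/-- `Q_H` is `avgMat (fun h : H => (h : G))` and `Q_G` is `avgMat (fun g : G => g)`. -/
noncomputable def avgMat (u : ι → G) : Matrix X X ℝ :=
  (Fintype.card ι : ℝ)⁻¹ • ∑ i, permMat (u i)

lemma avgMat_mulVec (u : ι → G) (f : X → ℝ) :
    (avgMat u : Matrix X X ℝ) *ᵥ f = fun x => (∑ i, f (u i • x)) / Fintype.card ι := by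
  ext x
  simp only [avgMat, smul_mulVec, sum_mulVec, permMat_mulVec, Pi.smul_apply, Finset.sum_apply,
    smul_eq_mul]
  ring

variable [Nonempty ι]

lemma mul_avgMat_of_forall_mul_permMat {M : Matrix X X ℝ} (hM : ∀ g : G, M * permMat g = M)
    (u : ι → G) : M * avgMat u = M := by
  simp only [avgMat, Matrix.mul_smul, mul_sum, hM, sum_const, card_univ,
    ← Nat.cast_smul_eq_nsmul ℝ, smul_smul]
  rw [inv_mul_cancel₀ (Nat.cast_ne_zero.mpr Fintype.card_ne_zero), one_smul]

lemma avgMat_mul_of_forall_permMat_mul {M : Matrix X X ℝ} (hM : ∀ g : G, permMat g * M = M)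
    (u : ι → G) : avgMat u * M = M := by
  simp only [avgMat, Matrix.smul_mul, sum_mul, hM, sum_const, card_univ,
    ← Nat.cast_smul_eq_nsmul ℝ, smul_smul]
  rw [inv_mul_cancel₀ (Nat.cast_ne_zero.mpr Fintype.card_ne_zero), one_smul]

variable {π : X → ℝ}

lemma sum_mul_avgMat_mulVec (hπ : ∀ (g : G) x, π (g • x) = π x) (u : ι → G) (f : X → ℝ) :
    ∑ x, π x * ((avgMat u : Matrix X X ℝ) *ᵥ f) x = ∑ x, π x * f x := by
  rw [avgMat_mulVec]
  exact sum_mul_average_comp_smul hπ u f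

lemma pNorm_avgMat_mulVec_le (hπ_nonneg : ∀ x, 0 ≤ π x) (hπ : ∀ (g : G) x, π (g • x) = π x)
    (u : ι → G) (f : X → ℝ) : pNorm π ((avgMat u : Matrix X X ℝ) *ᵥ f) ≤ pNorm π f := by
  rw [avgMat_mulVec]
  refine Real.sqrt_le_sqrt ?_
  calc ∑ x, π x * ((∑ i, f (u i • x)) / Fintype.card ι) ^ 2
      ≤ ∑ x, π x * ((∑ i, f (u i • x) ^ 2) / Fintype.card ι) :=
        sum_le_sum fun x _ => mul_le_mul_of_nonneg_left
          (by simpa using sum_div_card_sq_le_sum_sq_div_card (s := univ)) (hπ_nonneg x)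
    _ = ∑ x, π x * f x ^ 2 := sum_mul_average_comp_smul hπ u (f · ^ 2)

end Averaging

section GroupAverage

variable {X G : Type*} [Fintype X] [DecidableEq X] [Group G] [MulAction G X] [Fintype G]

lemma avgMat_univ_mul_permMat (g : G) :
    (avgMat (fun g : G => g) * permMat g : Matrix X X ℝ) = avgMat (fun g : G => g) := by
  simp only [avgMat, Matrix.smul_mul, sum_mul, permMat_mul]
  exact congrArg _ (Equiv.sum_comp (Equiv.mulLeft g) (fun g => (permMat g : Matrix X X ℝ)))

lemma permMat_mul_avgMat_univ (g : G) :
    (permMat g * avgMat (fun g : G => g) : Matrix X X ℝ) = avgMat (fun g : G => g) := by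
  simp only [avgMat, Matrix.mul_smul, mul_sum, permMat_mul]
  exact congrArg _ (Equiv.sum_comp (Equiv.mulRight g) (fun g => (permMat g : Matrix X X ℝ)))

end GroupAverage

theorem stmt8_general {X G : Type*} [Fintype X] [DecidableEq X] [Fintype G] [Group G] [MulAction G X]
    (H : Subgroup G) [Fintype H]
    (π : X → ℝ) (hπpos : ∀ x, 0 < π x)
    (hπinv : ∀ (g : G) (x : X), π (g • x) = π x)
    (P : Matrix X X ℝ) :
    1 - opNorm20 π
        (((Fintype.card H : ℝ)⁻¹ • ∑ h : H, permMat (h : G)) * P *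
          ((Fintype.card H : ℝ)⁻¹ • ∑ h : H, permMat (h : G))) ≤
    1 - opNorm20 π
        (((Fintype.card G : ℝ)⁻¹ • ∑ g : G, permMat g) * P *
          ((Fintype.card G : ℝ)⁻¹ • ∑ g : G, permMat g)) := by
  have hGH := mul_avgMat_of_forall_mul_permMat (avgMat_univ_mul_permMat (X := X))
    (fun h : H => (h : G))
  have hHG := avgMat_mul_of_forall_permMat_mul (permMat_mul_avgMat_univ (X := X))
    (fun h : H => (h : G))
  set QH : Matrix X X ℝ := avgMat (fun h : H => (h : G))
  set QG : Matrix X X ℝ := avgMat (fun g : G => g)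
  have hQ : QG * P * QG = QG * (QH * P * QH) * QG :=
    calc QG * P * QG = (QG * QH) * P * (QH * QG) := by rw [hGH, hHG]
      _ = QG * (QH * P * QH) * QG := by simp only [Matrix.mul_assoc]
  change 1 - opNorm20 π (QH * P * QH) ≤ 1 - opNorm20 π (QG * P * QG)
  rw [hQ]
  exact sub_le_sub_left (opNorm20_mul_mul_le hπpos
    (pNorm_avgMat_mulVec_le (fun x => (hπpos x).le) hπinv _)
    (sum_mul_avgMat_mulVec hπinv _) (pNorm_avgMat_mulVec_le (fun x => (hπpos x).le) hπinv _)) 1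

/-- monotonicity of the multiplicative spectral gap
`γ(K) = 1 - ‖K‖_{L²₀(π)→L²₀(π)}` with respect to group size. For a subgroup `H ≤ G`
acting by restriction, `γ(Q_G P Q_G) ≥ γ(Q_H P Q_H)`, where `Q_G`, `Q_H` are the
uniform averages over `G` and `H` respectively. -/
theorem stmt8 {X G : Type*} [Fintype X] [DecidableEq X] [Fintype G] [Group G] [MulAction G X]
    (H : Subgroup G) [Fintype H]
    (π : X → ℝ) (hπpos : ∀ x, 0 < π x) (hπsum : ∑ x, π x = 1)
    (hπinv : ∀ (g : G) (x : X), π (g • x) = π x)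
    (P : Matrix X X ℝ) (hPnn : ∀ x y, 0 ≤ P x y) (hProw : ∀ x, ∑ y, P x y = 1)
    (hPstat : ∀ y, ∑ x, π x * P x y = π y) :
    1 - opNorm20 π
        (((Fintype.card H : ℝ)⁻¹ • ∑ h : H, permMat (h : G)) * P *
          ((Fintype.card H : ℝ)⁻¹ • ∑ h : H, permMat (h : G))) ≤
    1 - opNorm20 π
        (((Fintype.card G : ℝ)⁻¹ • ∑ g : G, permMat g) * P *
          ((Fintype.card G : ℝ)⁻¹ • ∑ g : G, permMat g)) :=
  stmt8_general H π hπpos hπinv P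
end

section
/- Let π be a G-invariant full-support probability on a finite set X and P a π-reversible stochastic matrix which is non-negative definite on L²(π) (⟨Pf,f⟩_π ≥ 0 for all f). Then Φ(QPQ) ≥ Φ(P), where Q = (1/|G|)Σ_g U_g and Φ is the Cheeger constant. -/
open Matrix

/-- The uniform group average `Q = (1/|G|) Σ_{g∈G} U_g`. -/
noncomputable def unifAvg (X G : Type*) [Fintype X] [DecidableEq X] [Fintype G] [Group G]
    [MulAction G X] : Matrix X X ℝ :=
  (Fintype.card G : ℝ)⁻¹ • ∑ g : G, permMat g

/-- Indicator function of a finite set. -/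
noncomputable def ind {X : Type*} [DecidableEq X] (A : Finset X) : X → ℝ :=
  fun x => if x ∈ A then 1 else 0

/-- The Dirichlet-type form `⟨(I−K)𝟙_A, 𝟙_A⟩_π`. -/
noncomputable def dForm {X : Type*} [Fintype X] [DecidableEq X] (π : X → ℝ)
    (K : Matrix X X ℝ) (A : Finset X) : ℝ :=
  ∑ x, π x * (ind A x - K.mulVec (ind A) x) * ind A x

/-- The Cheeger constant `Φ(K) = min_{0 < π(A) ≤ 1/2} ⟨(I−K)𝟙_A,𝟙_A⟩_π / π(A)`. -/
noncomputable def cheeger {X : Type*} [Fintype X] [DecidableEq X] (π : X → ℝ)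
    (K : Matrix X X ℝ) : ℝ :=
  ⨅ A : {A : Finset X // 0 < ∑ x ∈ A, π x ∧ ∑ x ∈ A, π x ≤ 1 / 2},
    dForm π K A.1 / ∑ x ∈ A.1, π x

/-!
Write `q_K(f) = ⟨K f, f⟩_π`, so that `dForm π K A = π(A) - q_K(𝟙_A)`. Invariance of `π` makes
`Q` self-adjoint in `L²(π)`, hence `q_{QPQ}(𝟙_A) = q_P(Q 𝟙_A)`, and `Q 𝟙_A` is the average of the
indicators `𝟙_{gA}`. A non-negative quadratic form is convex, so by Jensen `q_P(Q 𝟙_A)` is at most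
the average of the `q_P(𝟙_{gA})`. Thus `dForm π (QPQ) A` dominates the average of
`dForm π P (gA) ≥ Φ(P) π(gA) = Φ(P) π(A)`.
-/

open Finset Pointwise

namespace LinearMap.BilinForm

variable {R M : Type*} [CommRing R] [LinearOrder R] [IsStrictOrderedRing R]
  [AddCommGroup M] [Module R M]

theorem IsNonneg.convexOn {B : LinearMap.BilinForm R M} (hB : B.IsNonneg) :
    ConvexOn R Set.univ fun x => B x x := by
  refine ⟨convex_univ, fun x _ y _ a b ha hb hab => ?_⟩
  -- `a B(x,x) + b B(y,y) - B(ax+by, ax+by) = a b B(x-y, x-y)` when `a + b = 1`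
  have hxy := mul_nonneg (mul_nonneg ha hb) (hB.nonneg (x - y))
  simp only [map_add, map_smul, map_sub, LinearMap.add_apply, LinearMap.sub_apply,
    LinearMap.smul_apply, smul_eq_mul] at hxy ⊢
  linear_combination hxy + (a * B x x + b * B y y) * hab

end LinearMap.BilinForm

section

variable {X G : Type*} [DecidableEq X]

section SmulFinset

variable [Group G] [MulAction G X]

theorem ind_smul_finset (g : G) (A : Finset X) (x : X) : ind (g • A) x = ind A (g⁻¹ • x) := by
  simp only [ind, Finset.inv_smul_mem_iff]

theorem sum_smul_finset_of_invariant (π : X → ℝ) (hπinv : ∀ (g : G) (x : X), π (g • x) = π x)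
    (g : G) (A : Finset X) : ∑ x ∈ g • A, π x = ∑ x ∈ A, π x := by
  rw [Finset.smul_finset_def, Finset.sum_image fun _ _ _ _ h => MulAction.injective g h]
  exact Finset.sum_congr rfl fun x _ => hπinv g x

end SmulFinset

variable [Fintype X]

theorem toBilin'_diagonal_mul_apply_self (π : X → ℝ) (K : Matrix X X ℝ) (f : X → ℝ) :
    toBilin' (diagonal π * K) f f = ∑ x, π x * (K *ᵥ f) x * f x := by
  rw [toBilin'_apply', ← mulVec_mulVec, dotProduct]
  exact Finset.sum_congr rfl fun x _ => by simp only [mulVec_diagonal]; ring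

theorem sum_mul_ind_mul_ind (π : X → ℝ) (A : Finset X) :
    ∑ x, π x * ind A x * ind A x = ∑ x ∈ A, π x := by
  simp [ind, Finset.sum_ite_mem]

theorem dForm_eq (π : X → ℝ) (K : Matrix X X ℝ) (A : Finset X) :
    dForm π K A = ∑ x ∈ A, π x - toBilin' (diagonal π * K) (ind A) (ind A) := by
  rw [toBilin'_diagonal_mul_apply_self, ← sum_mul_ind_mul_ind, ← Finset.sum_sub_distrib]
  exact Finset.sum_congr rfl fun x _ => by ring

theorem cheeger_mul_le_dForm (π : X → ℝ) (K : Matrix X X ℝ) {A : Finset X}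
    (hA : 0 < ∑ x ∈ A, π x ∧ ∑ x ∈ A, π x ≤ 1 / 2) :
    cheeger π K * ∑ x ∈ A, π x ≤ dForm π K A := by
  rw [← le_div_iff₀ hA.1, cheeger]
  exact ciInf_le (Set.finite_range _).bddBelow
    (⟨A, hA⟩ : {A : Finset X // 0 < ∑ x ∈ A, π x ∧ ∑ x ∈ A, π x ≤ 1 / 2})

theorem cheeger_le_cheeger_of_forall (π : X → ℝ) (K L : Matrix X X ℝ)
    (h : ∀ A : Finset X, 0 < ∑ x ∈ A, π x → ∑ x ∈ A, π x ≤ 1 / 2 →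
      cheeger π K * ∑ x ∈ A, π x ≤ dForm π L A) :
    cheeger π K ≤ cheeger π L := by
  rcases isEmpty_or_nonempty {A : Finset X // 0 < ∑ x ∈ A, π x ∧ ∑ x ∈ A, π x ≤ 1 / 2}
    with _ | _
  -- no admissible set: both infima are the junk value `0`
  · simp only [cheeger, Real.iInf_of_isEmpty, le_refl]
  · exact le_ciInf fun A => (le_div_iff₀ A.2.1).2 (h A.1 A.2.1 A.2.2)

section GroupAction

variable [Group G] [MulAction G X] [Fintype G]

theorem unifAvg_mulVec_apply (v : X → ℝ) (x : X) :
    (unifAvg X G *ᵥ v) x = (Fintype.card G : ℝ)⁻¹ * ∑ g : G, v (g • x) := by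
  rw [unifAvg, smul_mulVec, Pi.smul_apply, smul_eq_mul]
  congr 1
  simp only [mulVec, dotProduct, Matrix.sum_apply, permMat, Finset.sum_mul, ite_mul, one_mul,
    zero_mul]
  rw [Finset.sum_comm]
  simp

theorem unifAvg_mulVec_ind (A : Finset X) :
    unifAvg X G *ᵥ ind A = ∑ g : G, (Fintype.card G : ℝ)⁻¹ • ind (g • A) := by
  ext x
  simp only [unifAvg_mulVec_apply, Finset.sum_apply, Pi.smul_apply, smul_eq_mul,
    ← Finset.mul_sum, ind_smul_finset]
  congr 1
  exact Fintype.sum_equiv (Equiv.inv G) _ _ fun g => by simp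

theorem sum_mul_unifAvg_mulVec_mul (π : X → ℝ) (hπinv : ∀ (g : G) (x : X), π (g • x) = π x)
    (v h : X → ℝ) :
    ∑ x, π x * (unifAvg X G *ᵥ v) x * h x = ∑ x, π x * v x * (unifAvg X G *ᵥ h) x := by
  have expand : ∀ u w : X → ℝ, ∑ x, π x * (unifAvg X G *ᵥ u) x * w x
      = (Fintype.card G : ℝ)⁻¹ * ∑ g : G, ∑ x, π x * u (g • x) * w x := by
    intro u w
    simp only [unifAvg_mulVec_apply, Finset.mul_sum, Finset.sum_mul]
    rw [Finset.sum_comm]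
    exact Finset.sum_congr rfl fun g _ => Finset.sum_congr rfl fun x _ => by ring
  have shift (g : G) : ∑ x, π x * v (g • x) * h x = ∑ x, π x * h (g⁻¹ • x) * v x :=
    Fintype.sum_equiv (MulAction.toPerm g) _ _ fun x => by simp [hπinv, mul_right_comm]
  simp_rw [mul_right_comm _ (v _), expand, shift]
  congr 1
  exact Fintype.sum_equiv (Equiv.inv G) _ _ fun g => by simp only [Equiv.inv_apply]

theorem toBilin'_diagonal_mul_unifAvg_mul_mul_unifAvg_apply_self (π : X → ℝ)
    (hπinv : ∀ (g : G) (x : X), π (g • x) = π x) (K : Matrix X X ℝ) (f : X → ℝ) :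
    toBilin' (diagonal π * (unifAvg X G * K * unifAvg X G)) f f
      = toBilin' (diagonal π * K) (unifAvg X G *ᵥ f) (unifAvg X G *ᵥ f) := by
  rw [toBilin'_diagonal_mul_apply_self, toBilin'_diagonal_mul_apply_self, ← mulVec_mulVec,
    ← mulVec_mulVec, sum_mul_unifAvg_mulVec_mul π hπinv]

theorem inv_card_mul_sum_dForm_smul_le_dForm_unifAvg (π : X → ℝ)
    (hπinv : ∀ (g : G) (x : X), π (g • x) = π x) (P : Matrix X X ℝ)
    (hPpsd : ∀ f : X → ℝ, 0 ≤ ∑ x, π x * P.mulVec f x * f x) (A : Finset X) :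
    (Fintype.card G : ℝ)⁻¹ * ∑ g : G, dForm π P (g • A)
      ≤ dForm π (unifAvg X G * P * unifAvg X G) A := by
  have hB : (toBilin' (diagonal π * P)).IsNonneg :=
    ⟨fun f => (toBilin'_diagonal_mul_apply_self π P f).symm ▸ hPpsd f⟩
  have jensen := hB.convexOn.map_sum_le (t := univ) (w := fun _ : G => (Fintype.card G : ℝ)⁻¹)
    (p := fun g => ind (g • A)) (fun _ _ => by positivity) (by simp) (fun _ _ => trivial)
  simp only [← unifAvg_mulVec_ind, smul_eq_mul, ← Finset.mul_sum] at jensen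
  simp only [dForm_eq, sum_smul_finset_of_invariant π hπinv,
    toBilin'_diagonal_mul_unifAvg_mul_mul_unifAvg_apply_self π hπinv, Finset.sum_sub_distrib,
    sum_const, card_univ, nsmul_eq_mul, mul_sub]
  rw [inv_mul_cancel_left₀ (by positivity)]
  linarith

end GroupAction

end

theorem stmt11_general {X G : Type*} [Fintype X] [DecidableEq X] [Fintype G] [Group G] [MulAction G X]
    (π : X → ℝ)
    (hπinv : ∀ (g : G) (x : X), π (g • x) = π x)
    (P : Matrix X X ℝ)
    (hPpsd : ∀ f : X → ℝ, 0 ≤ ∑ x, π x * P.mulVec f x * f x) :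
    cheeger π P ≤ cheeger π (unifAvg X G * P * unifAvg X G) := by
  refine cheeger_le_cheeger_of_forall π P _ fun A hA₀ hA₁ => ?_
  have hgA (g : G) := sum_smul_finset_of_invariant π hπinv g A
  calc cheeger π P * ∑ x ∈ A, π x
      = (Fintype.card G : ℝ)⁻¹ * ∑ g : G, cheeger π P * ∑ x ∈ g • A, π x := by
        simp only [hgA, sum_const, card_univ, nsmul_eq_mul]
        field_simp
    _ ≤ (Fintype.card G : ℝ)⁻¹ * ∑ g : G, dForm π P (g • A) := by
        gcongr with g
        exact cheeger_mul_le_dForm π P ⟨(hgA g).symm ▸ hA₀, (hgA g).symm ▸ hA₁⟩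
    _ ≤ dForm π (unifAvg X G * P * unifAvg X G) A :=
        inv_card_mul_sum_dForm_smul_le_dForm_unifAvg π hπinv P hPpsd A

/-- for `π`-reversible non-negative-definite `P` and `G`-invariant `π`,
`Φ(QPQ) ≥ Φ(P)`. -/
theorem stmt11 {X G : Type*} [Fintype X] [DecidableEq X] [Fintype G] [Group G] [MulAction G X]
    (π : X → ℝ) (hπpos : ∀ x, 0 < π x) (hπsum : ∑ x, π x = 1)
    (hπinv : ∀ (g : G) (x : X), π (g • x) = π x)
    (P : Matrix X X ℝ) (hPnn : ∀ x y, 0 ≤ P x y) (hProw : ∀ x, ∑ y, P x y = 1)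
    (hPrev : ∀ x y, π x * P x y = π y * P y x)
    (hPpsd : ∀ f : X → ℝ, 0 ≤ ∑ x, π x * P.mulVec f x * f x) :
    cheeger π P ≤ cheeger π (unifAvg X G * P * unifAvg X G) :=
  stmt11_general π hπinv P hPpsd
end

section
/- Let G be a finite group acting on a finite set X with G-invariant full-support π; let P be any real X×X matrix, ν a probability on G×G with ν(g,h) = ν(g^{-1},h^{-1}), and suppose M and P_da := Σ ν(g,h) U_g P U_h both satisfy K = Σ ν(g,h) U_g K U_h. Then the Frobenius-norm Pythagorean identity holds: ‖P−M‖_F² = ‖P−P_da‖_F² + ‖P_da−M‖_F². -/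
open Matrix

/-- Squared Frobenius norm `‖A‖_F² = Σ_{x,y} A(x,y)²`. -/
noncomputable def frobSq {X : Type*} [Fintype X] (A : Matrix X X ℝ) : ℝ :=
  ∑ x, ∑ y, A x y ^ 2

/-!
Under the trace pairing `⟨A, B⟩ = tr (Aᵀ B)`, whose quadratic form is `frobSq`, the averaging
operator `K ↦ Σ ν(g,h) U_g K U_h` is self-adjoint: `U_gᵀ = U_{g⁻¹}`, cyclicity of the trace moves
the outer factors onto the other argument, and `ν(g,h) = ν(g⁻¹,h⁻¹)` reindexes the sum. Since
`P_da - M` is fixed by the averaging, `⟨P - P_da, P_da - M⟩ = ⟨P, P_da - M⟩ - ⟨P_da, P_da - M⟩`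
vanishes, and the identity is Pythagoras.
-/

theorem frobSq_eq_trace {X : Type*} [Fintype X] (A : Matrix X X ℝ) :
    frobSq A = trace (Aᵀ * A) := by
  simp only [frobSq, trace, diag, mul_apply, transpose_apply, sq]
  exact Finset.sum_comm

theorem frobSq_add_of_trace_transpose_mul_eq_zero {X : Type*} [Fintype X] {A B : Matrix X X ℝ}
    (h : trace (Aᵀ * B) = 0) : frobSq (A + B) = frobSq A + frobSq B := by
  have hBA : trace (Bᵀ * A) = 0 := by rw [← trace_transpose, transpose_mul, transpose_transpose, h]
  simp only [frobSq_eq_trace, transpose_add, add_mul, mul_add, trace_add, h, hBA]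
  ring

section Action

variable {X G : Type*} [Fintype X] [DecidableEq X] [Group G] [MulAction G X]

theorem permMat_transpose (g : G) : (permMat g : Matrix X X ℝ)ᵀ = permMat g⁻¹ := by
  ext x y
  simp only [transpose_apply, permMat, eq_inv_smul_iff, eq_comm]

theorem trace_transpose_permMat_conj_mul (g h : G) (C D : Matrix X X ℝ) :
    trace ((permMat g * C * permMat h)ᵀ * D) = trace (Cᵀ * (permMat g⁻¹ * D * permMat h⁻¹)) := by
  rw [transpose_mul, transpose_mul, permMat_transpose, permMat_transpose, Matrix.mul_assoc,
    Matrix.mul_assoc, trace_mul_comm, Matrix.mul_assoc, Matrix.mul_assoc]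

variable [Fintype G]

theorem doubleAvg_sub (ν : G × G → ℝ) (A B : Matrix X X ℝ) :
    doubleAvg ν (A - B) = doubleAvg ν A - doubleAvg ν B := by
  simp only [doubleAvg, Matrix.mul_sub, Matrix.sub_mul, smul_sub, Finset.sum_sub_distrib]

theorem trace_transpose_doubleAvg_mul (ν : G × G → ℝ) (hν : ∀ p : G × G, ν p = ν (p.1⁻¹, p.2⁻¹))
    (C D : Matrix X X ℝ) :
    trace ((doubleAvg ν C)ᵀ * D) = trace (Cᵀ * doubleAvg ν D) := by
  simp only [doubleAvg, transpose_sum, transpose_smul, Matrix.sum_mul, Matrix.mul_sum,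
    Matrix.smul_mul, Matrix.mul_smul, trace_sum, trace_smul, trace_transpose_permMat_conj_mul]
  exact Fintype.sum_equiv (Equiv.prodCongr (Equiv.inv G) (Equiv.inv G)) _ _ fun p =>
    congrArg (· * _) (hν p)

end Action

theorem stmt14_general {X G : Type*} [Fintype X] [DecidableEq X] [Fintype G] [Group G] [MulAction G X]
    (P M : Matrix X X ℝ)
    (ν : G × G → ℝ)
    (hνsymm : ∀ p : G × G, ν p = ν (p.1⁻¹, p.2⁻¹))
    (hMinv : doubleAvg ν M = M)
    (hPdainv : doubleAvg ν (doubleAvg ν P) = doubleAvg ν P) :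
    frobSq (P - M) = frobSq (P - doubleAvg ν P) + frobSq (doubleAvg ν P - M) := by
  set Q := doubleAvg ν P
  have hfix : doubleAvg ν (Q - M) = Q - M := by rw [doubleAvg_sub, hMinv, hPdainv]
  have horth : trace ((P - Q)ᵀ * (Q - M)) = 0 := by
    have hQ : trace (Qᵀ * (Q - M)) = trace (Pᵀ * (Q - M)) := by
      rw [trace_transpose_doubleAvg_mul ν hνsymm, hfix]
    rw [transpose_sub, Matrix.sub_mul, trace_sub, hQ, sub_self]
  rw [← frobSq_add_of_trace_transpose_mul_eq_zero horth, sub_add_sub_cancel]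

/-- Pythagorean identity under the squared Frobenius norm:
if `ν(g,h) = ν(g⁻¹,h⁻¹)` and both `M` and `P_da` are fixed by the `ν`-averaging, then
`‖P−M‖_F² = ‖P−P_da‖_F² + ‖P_da−M‖_F²`, for `π` `G`-invariant with full support. -/
theorem stmt14 {X G : Type*} [Fintype X] [DecidableEq X] [Fintype G] [Group G] [MulAction G X]
    (π : X → ℝ) (hπpos : ∀ x, 0 < π x) (hπsum : ∑ x, π x = 1)
    (hπinv : ∀ (g : G) (x : X), π (g • x) = π x)
    (P M : Matrix X X ℝ)
    (ν : G × G → ℝ) (hνnn : ∀ p, 0 ≤ ν p) (hνsum : ∑ p : G × G, ν p = 1)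
    (hνsymm : ∀ p : G × G, ν p = ν (p.1⁻¹, p.2⁻¹))
    (hMinv : doubleAvg ν M = M)
    (hPdainv : doubleAvg ν (doubleAvg ν P) = doubleAvg ν P) :
    frobSq (P - M) = frobSq (P - doubleAvg ν P) + frobSq (doubleAvg ν P - M) :=
  stmt14_general P M ν hνsymm hMinv hPdainv
end

section
/- Let X be finite, π full-support, and define the state-dependent averaging kernel Q(x, gx) := π(gx)/Σ_{h∈G} π(hx) for a finite group G acting on X (without assuming π is G-invariant). Then Q is a π-reversible stochastic matrix and equals the orthogonal projection in L²(π) onto the subspace V of G-invariant functions. -/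
/-! Both the numerator and the normaliser `Z_G(x)` of `Q(x, y)` are sums `Σ_g F(g•x)` over the
orbit of `x`, hence `Q(g•x, y) = Q(x, y)`: `Q f` is invariant. An invariant `f` is fixed since
the weights `π(g•x)` of `Q[f](x)` sum to `Z_G(x)`; applied to the invariant columns of `Q`, this
gives `Q² = Q`. Reversibility holds because `π(x) Q(x, y) = π(x) π(y) #{g | g•x = y} / Z_G(x)`,
where the count is symmetric under `g ↦ g⁻¹` and `Z_G(x) = Z_G(y)` whenever it is nonzero. -/

open Matrix

/-- The state-dependent averaging kernel: `Q(x, y) = (Σ_{g : g•x = y} π(g•x)) / Z_G(x)`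
with `Z_G(x) = Σ_{g∈G} π(g•x)`, i.e. `Q[f](x) = Z_G(x)⁻¹ Σ_g f(g•x) π(g•x)`. -/
noncomputable def stateDepAvg {X G : Type*} [Fintype X] [DecidableEq X] [Fintype G] [Group G]
    [MulAction G X] (π : X → ℝ) : Matrix X X ℝ :=
  fun x y => (∑ g : G, if y = g • x then π (g • x) else 0) / ∑ g : G, π (g • x)

theorem Fintype.sum_smul_smul_eq {X G M : Type*} [Fintype G] [Group G] [MulAction G X]
    [AddCommMonoid M] (F : X → M) (g₀ : G) (x : X) :
    ∑ g : G, F (g • g₀ • x) = ∑ g : G, F (g • x) := by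
  simpa [mul_smul] using Equiv.sum_comp (Equiv.mulRight g₀) (fun g => F (g • x))

namespace StateDepAvg

open Finset

variable {X G : Type*} [Fintype X] [DecidableEq X] [Fintype G] [Group G] [MulAction G X]
  {π : X → ℝ}

theorem apply_smul_left (π : X → ℝ) (g₀ : G) (x y : X) :
    stateDepAvg (G := G) π (g₀ • x) y = stateDepAvg (G := G) π x y := by
  simp only [stateDepAvg]
  rw [Fintype.sum_smul_smul_eq π, Fintype.sum_smul_smul_eq (fun z => if y = z then π z else 0)]

theorem nonneg (hπ : ∀ x, 0 ≤ π x) (x y : X) : 0 ≤ stateDepAvg (G := G) π x y :=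
  div_nonneg (sum_nonneg fun _ _ => by split_ifs <;> simp [hπ]) (sum_nonneg fun _ _ => hπ _)

theorem mulVec_apply (π : X → ℝ) (f : X → ℝ) (x : X) :
    (stateDepAvg (G := G) π).mulVec f x
      = (∑ g : G, π (g • x) * f (g • x)) / ∑ g : G, π (g • x) := by
  simp only [stateDepAvg, mulVec, dotProduct, div_mul_eq_mul_div, sum_mul, ← sum_div]
  rw [sum_comm]
  simp [ite_mul]

theorem mulVec_apply_smul (π : X → ℝ) (f : X → ℝ) (g : G) (x : X) :
    (stateDepAvg (G := G) π).mulVec f (g • x) = (stateDepAvg (G := G) π).mulVec f x := by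
  simp only [mulVec, dotProduct, apply_smul_left]

theorem mulVec_of_invariant (hπ : ∀ x, 0 < π x) {f : X → ℝ}
    (hf : ∀ (g : G) (x : X), f (g • x) = f x) : (stateDepAvg (G := G) π).mulVec f = f := by
  have hZ (x : X) : ∑ g : G, π (g • x) ≠ 0 := (sum_pos (fun _ _ => hπ _) univ_nonempty).ne'
  funext x
  rw [mulVec_apply]
  simp only [hf, ← sum_mul]
  field_simp [hZ x]

theorem row_sum_eq_one (hπ : ∀ x, 0 < π x) (x : X) : ∑ y, stateDepAvg (G := G) π x y = 1 := by
  simpa [mulVec, dotProduct] using congrFun (mulVec_of_invariant hπ (f := 1) fun _ _ => rfl) x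

theorem mul_self (hπ : ∀ x, 0 < π x) :
    stateDepAvg (G := G) π * stateDepAvg (G := G) π = stateDepAvg (G := G) π := by
  ext x y
  exact congrFun (mulVec_of_invariant hπ fun g z => apply_smul_left π g z y) x

theorem apply_eq_card (π : X → ℝ) (x y : X) :
    stateDepAvg (G := G) π x y = #{g : G | g • x = y} * π y / ∑ g : G, π (g • x) := by
  rw [stateDepAvg, ← sum_boole, sum_mul]
  congr 1
  refine sum_congr rfl fun g _ => ?_
  obtain rfl | h := eq_or_ne (g • x) y
  · simp
  · simp [h, h.symm]

omit [Fintype X] in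
theorem card_smul_eq_comm (x y : X) : #{g : G | g • x = y} = #{g : G | g • y = x} := by
  refine card_bij' (fun g _ => g⁻¹) (fun g _ => g⁻¹) ?_ ?_ (by simp) (by simp) <;>
  · intro g hg
    simp only [mem_filter, mem_univ, true_and] at hg ⊢
    rw [← hg, inv_smul_smul]

theorem detailed_balance (π : X → ℝ) (x y : X) :
    π x * stateDepAvg (G := G) π x y = π y * stateDepAvg (G := G) π y x := by
  rw [apply_eq_card, apply_eq_card, card_smul_eq_comm x y]
  obtain ⟨g₀, rfl⟩ | hxy := em (∃ g : G, g • y = x)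
  · rw [Fintype.sum_smul_smul_eq π]
    ring
  · have hcard : #{g : G | g • y = x} = 0 :=
      card_eq_zero.2 <| filter_eq_empty_iff.2 fun g _ h => hxy ⟨g, h⟩
    simp [hcard]

end StateDepAvg

theorem stmt19_general {X G : Type*} [Fintype X] [DecidableEq X] [Fintype G] [Group G] [MulAction G X]
    (π : X → ℝ) (hπpos : ∀ x, 0 < π x) :
    (∀ x y, 0 ≤ stateDepAvg (G := G) π x y) ∧
    (∀ x, ∑ y, stateDepAvg (G := G) π x y = 1) ∧
    (∀ x y, π x * stateDepAvg (G := G) π x y = π y * stateDepAvg (G := G) π y x) ∧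
    stateDepAvg (G := G) π * stateDepAvg (G := G) π = stateDepAvg (G := G) π ∧
    (∀ f : X → ℝ, (∀ (g : G) (x : X), f (g • x) = f x) →
      (stateDepAvg (G := G) π).mulVec f = f) ∧
    (∀ (f : X → ℝ) (g : G) (x : X),
      (stateDepAvg (G := G) π).mulVec f (g • x) = (stateDepAvg (G := G) π).mulVec f x) :=
  ⟨StateDepAvg.nonneg fun x => (hπpos x).le, StateDepAvg.row_sum_eq_one hπpos, StateDepAvg.detailed_balance π,
    StateDepAvg.mul_self hπpos, fun _ => StateDepAvg.mulVec_of_invariant hπpos,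
    StateDepAvg.mulVec_apply_smul π⟩

/-- without assuming `π` is `G`-invariant, the state-dependent averaging
kernel `Q` is a `π`-reversible stochastic matrix and is the orthogonal projection in
`L²(π)` onto the subspace `V` of `G`-invariant functions: it is idempotent,
self-adjoint with respect to `⟨·,·⟩_π`, fixes every `G`-invariant function, and its
range consists of `G`-invariant functions. -/
theorem stmt19 {X G : Type*} [Fintype X] [DecidableEq X] [Fintype G] [Group G] [MulAction G X]
    (π : X → ℝ) (hπpos : ∀ x, 0 < π x) (hπsum : ∑ x, π x = 1) :
    (∀ x y, 0 ≤ stateDepAvg (G := G) π x y) ∧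
    (∀ x, ∑ y, stateDepAvg (G := G) π x y = 1) ∧
    (∀ x y, π x * stateDepAvg (G := G) π x y = π y * stateDepAvg (G := G) π y x) ∧
    stateDepAvg (G := G) π * stateDepAvg (G := G) π = stateDepAvg (G := G) π ∧
    (∀ f : X → ℝ, (∀ (g : G) (x : X), f (g • x) = f x) →
      (stateDepAvg (G := G) π).mulVec f = f) ∧
    (∀ (f : X → ℝ) (g : G) (x : X),
      (stateDepAvg (G := G) π).mulVec f (g • x) = (stateDepAvg (G := G) π).mulVec f x) :=
  stmt19_general π hπpos
end
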